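/- In a strictly convex Hilbert geometry geodesics are unique and are the line segments: if Ω ⊆ ℝⁿ is bounded, open, convex and strictly convex, and x, y, z ∈ Ω satisfy d_Ω(x,z) = d_Ω(x,y) + d_Ω(y,z), then y lies on the segment [x, z]. -/

import Mathlib

/-!
Write `q(u, w)` for the point where the ray from `u` through `w` leaves `Ω`, and
`F(u, w) = log (|u - q(u, w)| / |w - q(u, w)|)` for the Funk distance, so that
`2 d_Ω(u, w) = F(u, w) + F(w, u)`. If `Ω` lies in the open half-space `f < c`, then
`log (c - f u) - log (c - f w) ≤ F(u, w)`, with equality exactly when `f (q(u, w)) = c`.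

Take such half-spaces supporting `Ω` at `q(x, z)` and at `q(z, x)`. Adding the four bounds
along `x → y → z` and back, the hypothesis `d_Ω(x, z) = d_Ω(x, y) + d_Ω(y, z)` forces equality
in each of them, so the hyperplane supporting `Ω` at `q(x, z)` contains `q(x, y)` and
`q(y, z)`. By strict convexity both equal `q(x, z)`, and then `y` lies between `x` and `z`.
-/

open Set MeasureTheory
open scoped ENNReal Classical

noncomputable section

/-- The set of parameters `t` for which `x + t • (y - x)` lies in the closure of `Ω`. -/
def chordParams {n : ℕ} (Ω : Set (EuclideanSpace ℝ (Fin n)))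
    (x y : EuclideanSpace ℝ (Fin n)) : Set ℝ :=
  {t : ℝ | x + t • (y - x) ∈ closure Ω}

/-- The Hilbert distance on a bounded open convex set `Ω`: for `x ≠ y` the line
through `x` and `y` meets `∂Ω` at `p = x + a • (y - x)` and `q = x + b • (y - x)`
where `a = sInf (chordParams Ω x y) ≤ 0` and `b = sSup (chordParams Ω x y) ≥ 1`,
so that `p, x, y, q` occur in this order on the line, and
`d_Ω(x,y) = (1/2) log (|p-y||q-x| / (|p-x||q-y|))`. -/
def hilbertDist {n : ℕ} (Ω : Set (EuclideanSpace ℝ (Fin n)))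
    (x y : EuclideanSpace ℝ (Fin n)) : ℝ :=
  if x = y then 0
  else
    let p := x + sInf (chordParams Ω x y) • (y - x)
    let q := x + sSup (chordParams Ω x y) • (y - x)
    (1 / 2) * Real.log ((dist p y * dist q x) / (dist p x * dist q y))

open Topology

section

variable {E : Type*} [NormedAddCommGroup E] [NormedSpace ℝ E] {Ω : Set E}

lemma add_smul_sub_eq_lineMap (u w : E) (t : ℝ) : u + t • (w - u) = AffineMap.lineMap u w t := by
  rw [AffineMap.lineMap_apply_module', add_comm]

lemma sub_map_add_smul_sub (f : E →L[ℝ] ℝ) (c t : ℝ) (u w : E) :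
    c - f (u + t • (w - u)) = (1 - t) * (c - f u) + t * (c - f w) := by
  simp only [map_add, map_smul, map_sub, smul_eq_mul]
  ring

lemma map_le_of_mem_closure {f : E →L[ℝ] ℝ} {c : ℝ} (hf : ∀ m ∈ Ω, f m < c) {m : E}
    (hm : m ∈ closure Ω) : f m ≤ c :=
  closure_lt_subset_le f.continuous continuous_const (closure_mono hf hm)

lemma eq_of_mem_closure_of_map_eq (hop : IsOpen Ω) (hconv : Convex ℝ Ω)
    (hstrict : ∀ p q : E, p ≠ q → ¬ segment ℝ p q ⊆ frontier Ω)
    {f : E →L[ℝ] ℝ} {c : ℝ} (hf : ∀ m ∈ Ω, f m < c) {q₁ q₂ : E}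
    (hq₁ : q₁ ∈ closure Ω) (hq₂ : q₂ ∈ closure Ω) (hfq₁ : f q₁ = c) (hfq₂ : f q₂ = c) :
    q₁ = q₂ := by
  by_contra hne
  refine hstrict q₁ q₂ hne fun m hm => ?_
  have hfm : f m = c := (convex_hyperplane f.isLinear c).segment_subset hfq₁ hfq₂ hm
  rw [hop.frontier_eq]
  exact ⟨hconv.closure.segment_subset hq₁ hq₂ hm, fun hmΩ => (hf m hmΩ).ne hfm⟩

lemma wbtw_add_smul_sub {u w : E} {b : ℝ} (hb : 1 ≤ b) : Wbtw ℝ u w (u + b • (w - u)) := by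
  refine ⟨b⁻¹, ⟨inv_nonneg.2 (by linarith), inv_le_one_of_one_le₀ hb⟩, ?_⟩
  rw [AffineMap.lineMap_apply_module', add_sub_cancel_left, smul_smul,
    inv_mul_cancel₀ (by linarith), one_smul, sub_add_cancel]

end

lemma log_sub_log_le_log_div_sub_one_iff {U W b : ℝ} (hU : 0 < U) (hW : 0 < W) (hb : 1 < b) :
    Real.log U - Real.log W ≤ Real.log (b / (b - 1)) ↔ 0 ≤ (1 - b) * U + b * W := by
  rw [← Real.log_div hU.ne' hW.ne', Real.log_le_log_iff (div_pos hU hW)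
    (div_pos (by linarith) (by linarith)), div_le_div_iff₀ hW (by linarith)]
  constructor <;> intro h <;> linarith

lemma log_sub_log_eq_log_div_sub_one_iff {U W b : ℝ} (hU : 0 < U) (hW : 0 < W) (hb : 1 < b) :
    Real.log U - Real.log W = Real.log (b / (b - 1)) ↔ (1 - b) * U + b * W = 0 := by
  have hb' : 0 < b / (b - 1) := div_pos (by linarith) (by linarith)
  rw [← Real.log_div hU.ne' hW.ne', Real.log_injOn_pos.eq_iff (div_pos hU hW) hb',
    div_eq_div_iff hW.ne' (by linarith)]
  constructor <;> intro h <;> linarith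

section Chord

variable {n : ℕ} {Ω : Set (EuclideanSpace ℝ (Fin n))} {u w x y z : EuclideanSpace ℝ (Fin n)}
  {f : EuclideanSpace ℝ (Fin n) →L[ℝ] ℝ} {c : ℝ}

def chordExit (Ω : Set (EuclideanSpace ℝ (Fin n))) (u w : EuclideanSpace ℝ (Fin n)) :
    EuclideanSpace ℝ (Fin n) :=
  u + sSup (chordParams Ω u w) • (w - u)

/-- `log (|u - q| / |w - q|)` for `q = chordExit Ω u w`, as `q = u + b • (w - u)` with
`b = sSup (chordParams Ω u w)`. -/
def funkDist (Ω : Set (EuclideanSpace ℝ (Fin n))) (u w : EuclideanSpace ℝ (Fin n)) : ℝ :=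
  Real.log (sSup (chordParams Ω u w) / (sSup (chordParams Ω u w) - 1))

lemma isCompact_chordParams (hbd : Bornology.IsBounded Ω) (huw : u ≠ w) :
    IsCompact (chordParams Ω u w) :=
  ((Homeomorph.addLeft u).isClosedEmbedding.comp
    (isClosedEmbedding_smul_left (sub_ne_zero.2 huw.symm))).isCompact_preimage
      hbd.isCompact_closure

lemma lt_sSup_chordParams (hbd : Bornology.IsBounded Ω) (hop : IsOpen Ω) (huw : u ≠ w) {t : ℝ}
    (ht : u + t • (w - u) ∈ Ω) : t < sSup (chordParams Ω u w) := by
  have hnhds : ∀ᶠ s in 𝓝 t, u + s • (w - u) ∈ Ω :=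
    (by fun_prop : Continuous fun s : ℝ => u + s • (w - u)).continuousAt.preimage_mem_nhds
      (hop.mem_nhds ht)
  obtain ⟨s, hts, hs⟩ := hnhds.exists_gt
  exact hts.trans_le (le_csSup (isCompact_chordParams hbd huw).bddAbove (subset_closure hs))

lemma one_lt_sSup_chordParams (hbd : Bornology.IsBounded Ω) (hop : IsOpen Ω) (hw : w ∈ Ω)
    (huw : u ≠ w) : 1 < sSup (chordParams Ω u w) :=
  lt_sSup_chordParams hbd hop huw (by rwa [one_smul, add_sub_cancel])

lemma chordExit_notMem (hbd : Bornology.IsBounded Ω) (hop : IsOpen Ω) (huw : u ≠ w) :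
    chordExit Ω u w ∉ Ω :=
  fun h => (lt_sSup_chordParams hbd hop huw h).false

lemma chordExit_mem_closure (hbd : Bornology.IsBounded Ω) (hu : u ∈ Ω) (huw : u ≠ w) :
    chordExit Ω u w ∈ closure Ω :=
  (isCompact_chordParams hbd huw).sSup_mem ⟨0, subset_closure (by rwa [zero_smul, add_zero])⟩

lemma sSup_chordParams_swap (hbd : Bornology.IsBounded Ω) (hu : u ∈ Ω) (huw : u ≠ w) :
    sSup (chordParams Ω w u) = 1 - sInf (chordParams Ω u w) := by
  have hleast := (isCompact_chordParams hbd huw).isLeast_sInf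
    ⟨0, subset_closure (by rwa [zero_smul, add_zero])⟩
  have hswap : ∀ t, t ∈ chordParams Ω w u ↔ 1 - t ∈ chordParams Ω u w := fun t => by
    change _ ∈ closure Ω ↔ _ ∈ closure Ω
    rw [show w + t • (u - w) = u + (1 - t) • (w - u) by module]
  refine IsGreatest.csSup_eq ⟨(hswap _).2 (by rw [sub_sub_cancel]; exact hleast.1),
    fun t ht => ?_⟩
  linarith [hleast.2 ((hswap t).1 ht)]

lemma two_mul_hilbertDist (hbd : Bornology.IsBounded Ω) (hop : IsOpen Ω) (hu : u ∈ Ω)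
    (hw : w ∈ Ω) (huw : u ≠ w) :
    2 * hilbertDist Ω u w = funkDist Ω u w + funkDist Ω w u := by
  have hb := one_lt_sSup_chordParams hbd hop hw huw
  have ha := one_lt_sSup_chordParams hbd hop hu huw.symm
  rw [sSup_chordParams_swap hbd hu huw] at ha
  have hd : 0 < dist u w := dist_pos.2 huw
  rw [funkDist, funkDist, sSup_chordParams_swap hbd hu huw, hilbertDist, if_neg huw,
    ← Real.log_mul (by positivity) (by positivity)]
  simp only [add_smul_sub_eq_lineMap, dist_lineMap_left, dist_lineMap_right, Real.norm_eq_abs]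
  rw [abs_of_pos (by linarith), abs_of_pos (by linarith), abs_of_neg (by linarith),
    abs_of_neg (by linarith), ← mul_assoc, mul_one_div_cancel two_ne_zero, one_mul]
  congr 1
  field_simp
  ring

lemma funkDist_pos (hbd : Bornology.IsBounded Ω) (hop : IsOpen Ω) (hw : w ∈ Ω) (huw : u ≠ w) :
    0 < funkDist Ω u w := by
  have hb := one_lt_sSup_chordParams hbd hop hw huw
  exact Real.log_pos ((one_lt_div (by linarith)).2 (by linarith))

lemma hilbertDist_pos (hbd : Bornology.IsBounded Ω) (hop : IsOpen Ω) (hu : u ∈ Ω)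
    (hw : w ∈ Ω) (huw : u ≠ w) : 0 < hilbertDist Ω u w := by
  have := two_mul_hilbertDist hbd hop hu hw huw
  linarith [funkDist_pos hbd hop hw huw, funkDist_pos hbd hop hu huw.symm]

lemma log_sub_log_le_funkDist (hf : ∀ m ∈ Ω, f m < c) (hbd : Bornology.IsBounded Ω)
    (hop : IsOpen Ω) (hu : u ∈ Ω) (hw : w ∈ Ω) (huw : u ≠ w) :
    Real.log (c - f u) - Real.log (c - f w) ≤ funkDist Ω u w := by
  rw [funkDist, log_sub_log_le_log_div_sub_one_iff (sub_pos.2 (hf u hu)) (sub_pos.2 (hf w hw))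
    (one_lt_sSup_chordParams hbd hop hw huw), ← sub_map_add_smul_sub, sub_nonneg]
  exact map_le_of_mem_closure hf (chordExit_mem_closure hbd hu huw)

lemma log_sub_log_eq_funkDist_iff (hf : ∀ m ∈ Ω, f m < c) (hbd : Bornology.IsBounded Ω)
    (hop : IsOpen Ω) (hu : u ∈ Ω) (hw : w ∈ Ω) (huw : u ≠ w) :
    Real.log (c - f u) - Real.log (c - f w) = funkDist Ω u w ↔ f (chordExit Ω u w) = c := by
  rw [funkDist, log_sub_log_eq_log_div_sub_one_iff (sub_pos.2 (hf u hu)) (sub_pos.2 (hf w hw))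
    (one_lt_sSup_chordParams hbd hop hw huw), ← sub_map_add_smul_sub, sub_eq_zero, eq_comm]
  rfl

lemma chordExit_eq_of_hilbertDist_add (hbd : Bornology.IsBounded Ω) (hop : IsOpen Ω)
    (hconv : Convex ℝ Ω)
    (hstrict : ∀ p q : EuclideanSpace ℝ (Fin n), p ≠ q → ¬ segment ℝ p q ⊆ frontier Ω)
    (hx : x ∈ Ω) (hy : y ∈ Ω) (hz : z ∈ Ω) (hxy : x ≠ y) (hyz : y ≠ z) (hxz : x ≠ z)
    (hadd : hilbertDist Ω x z = hilbertDist Ω x y + hilbertDist Ω y z) :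
    chordExit Ω x y = chordExit Ω y z := by
  obtain ⟨f, hf⟩ := geometric_hahn_banach_open_point hconv hop (chordExit_notMem hbd hop hxz)
  obtain ⟨g, hg⟩ :=
    geometric_hahn_banach_open_point hconv hop (chordExit_notMem hbd hop hxz.symm)
  have hfxz := (log_sub_log_eq_funkDist_iff hf hbd hop hx hz hxz).2 rfl
  have hgzx := (log_sub_log_eq_funkDist_iff hg hbd hop hz hx hxz.symm).2 rfl
  have hfxy := log_sub_log_le_funkDist hf hbd hop hx hy hxy
  have hfyz := log_sub_log_le_funkDist hf hbd hop hy hz hyz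
  have hgzy := log_sub_log_le_funkDist hg hbd hop hz hy hyz.symm
  have hgyx := log_sub_log_le_funkDist hg hbd hop hy hx hxy.symm
  have hdxz := two_mul_hilbertDist hbd hop hx hz hxz
  have hdxy := two_mul_hilbertDist hbd hop hx hy hxy
  have hdyz := two_mul_hilbertDist hbd hop hy hz hyz
  have hfq₁ : f (chordExit Ω x y) = f (chordExit Ω x z) :=
    (log_sub_log_eq_funkDist_iff hf hbd hop hx hy hxy).1 (by linarith)
  have hfq₂ : f (chordExit Ω y z) = f (chordExit Ω x z) :=
    (log_sub_log_eq_funkDist_iff hf hbd hop hy hz hyz).1 (by linarith)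
  exact eq_of_mem_closure_of_map_eq hop hconv hstrict hf (chordExit_mem_closure hbd hx hxy)
    (chordExit_mem_closure hbd hy hyz) hfq₁ hfq₂

lemma wbtw_of_chordExit_eq (hbd : Bornology.IsBounded Ω) (hop : IsOpen Ω) (hy : y ∈ Ω)
    (hz : z ∈ Ω) (hxy : x ≠ y) (hyz : y ≠ z)
    (h : chordExit Ω x y = chordExit Ω y z) : Wbtw ℝ x y z := by
  have hxyq : Wbtw ℝ x y (chordExit Ω x y) :=
    wbtw_add_smul_sub (one_lt_sSup_chordParams hbd hop hy hxy).le
  have hyzq : Wbtw ℝ y z (chordExit Ω x y) :=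
    h ▸ wbtw_add_smul_sub (one_lt_sSup_chordParams hbd hop hz hyz).le
  exact (hxyq.symm.trans_left_right hyzq.symm).symm

end Chord

theorem hilbertDist_strictly_convex_geodesics_unique_general {n : ℕ}
    (Ω : Set (EuclideanSpace ℝ (Fin n)))
    (hbd : Bornology.IsBounded Ω) (hop : IsOpen Ω) (hconv : Convex ℝ Ω)
    (hstrict : ∀ p q : EuclideanSpace ℝ (Fin n), p ≠ q → ¬ segment ℝ p q ⊆ frontier Ω)
    (x y z : EuclideanSpace ℝ (Fin n)) (hx : x ∈ Ω) (hy : y ∈ Ω) (hz : z ∈ Ω)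
    (hadd : hilbertDist Ω x z = hilbertDist Ω x y + hilbertDist Ω y z) :
    y ∈ segment ℝ x z := by
  rcases eq_or_ne x y with rfl | hxy
  · exact left_mem_segment ℝ x z
  rcases eq_or_ne y z with rfl | hyz
  · exact right_mem_segment ℝ x y
  rcases eq_or_ne x z with rfl | hxz
  · rw [hilbertDist, if_pos rfl] at hadd
    linarith [hilbertDist_pos hbd hop hx hy hxy, hilbertDist_pos hbd hop hy hx hxy.symm]
  exact (wbtw_of_chordExit_eq hbd hop hy hz hxy hyz
    (chordExit_eq_of_hilbertDist_add hbd hop hconv hstrict hx hy hz hxy hyz hxz hadd)).mem_segment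

/-- In a strictly convex Hilbert geometry, geodesics are unique and
are the line segments: if `Ω` is strictly convex (its boundary contains no
nondegenerate line segment) and `d_Ω(x,z) = d_Ω(x,y) + d_Ω(y,z)`, then `y` lies
on the segment `[x, z]`. -/
theorem hilbertDist_strictly_convex_geodesics_unique {n : ℕ} (hn : 1 ≤ n)
    (Ω : Set (EuclideanSpace ℝ (Fin n)))
    (hbd : Bornology.IsBounded Ω) (hop : IsOpen Ω) (hconv : Convex ℝ Ω)
    (hstrict : ∀ p q : EuclideanSpace ℝ (Fin n), p ≠ q → ¬ segment ℝ p q ⊆ frontier Ω)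
    (x y z : EuclideanSpace ℝ (Fin n)) (hx : x ∈ Ω) (hy : y ∈ Ω) (hz : z ∈ Ω)
    (hadd : hilbertDist Ω x z = hilbertDist Ω x y + hilbertDist Ω y z) :
    y ∈ segment ℝ x z :=
  hilbertDist_strictly_convex_geodesics_unique_general Ω hbd hop hconv hstrict x y z hx hy hz hadd

end
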